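/- arXiv:1910.13865 — 2 statements merged into one kernel-verified Lean document; each statement's English description precedes it below -/
import Mathlib

section
/- Let A be a real symmetric positive definite N×N matrix such that for every μ ≥ 0 all entries of the matrix (μI + A)^{-1} are nonnegative. Then for every α ∈ (0,1) all entries of A^{-α} are nonnegative (i.e., A^{-α} is positivity preserving). -/
/-!
By Balakrishnan's formula, `λ ^ (-α) = C⁻¹ ∫₀^∞ t ^ (-α) (t + λ)⁻¹ dt` with
`C = ∫₀^∞ t ^ (-α) (t + 1)⁻¹ dt > 0` for every `λ > 0` (scale `t ↦ λ t`). Applied to the spectral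
decomposition this gives `A ^ (-α) = C⁻¹ ∫₀^∞ t ^ (-α) (t I + A)⁻¹ dt`, an integral of
entrywise nonnegative matrices against a positive weight.
-/

open MeasureTheory Set Matrix

section Scalar

variable {α l : ℝ}

lemma integrableOn_rpow_neg_mul_inv_add (hα₀ : 0 < α) (hα₁ : α < 1) (hl : 0 < l) :
    IntegrableOn (fun t => t ^ (-α) * (t + l)⁻¹) (Ioi 0) := by
  have hmeas : AEStronglyMeasurable (fun t : ℝ => t ^ (-α) * (t + l)⁻¹) volume :=
    (by fun_prop : Measurable _).aestronglyMeasurable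
  rw [← Ioc_union_Ioi_eq_Ioi zero_le_one]
  refine IntegrableOn.union ?_ ?_
  · have hdom : IntegrableOn (fun t : ℝ => t ^ (-α) * l⁻¹) (Ioc 0 1) :=
      ((intervalIntegrable_iff_integrableOn_Ioc_of_le zero_le_one).1
        (intervalIntegral.intervalIntegrable_rpow' (by linarith))).mul_const _
    refine hdom.mono' hmeas.restrict ?_
    filter_upwards [ae_restrict_mem measurableSet_Ioc] with t ⟨ht₀, _⟩
    rw [Real.norm_of_nonneg (by positivity)]
    gcongr
    linarith
  · have hdom : IntegrableOn (fun t : ℝ => t ^ (-α - 1)) (Ioi 1) :=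
      integrableOn_Ioi_rpow_of_lt (by linarith) one_pos
    refine hdom.mono' hmeas.restrict ?_
    filter_upwards [ae_restrict_mem measurableSet_Ioi] with t (ht : 1 < t)
    have ht₀ : 0 < t := one_pos.trans ht
    rw [Real.norm_of_nonneg (by positivity), Real.rpow_sub ht₀, Real.rpow_one, div_eq_mul_inv]
    gcongr
    linarith

lemma integral_rpow_neg_mul_inv_add (hl : 0 < l) :
    ∫ t in Ioi 0, t ^ (-α) * (t + l)⁻¹ = l ^ (-α) * ∫ t in Ioi 0, t ^ (-α) * (t + 1)⁻¹ := by
  have hscale := integral_comp_mul_left_Ioi' (fun t => t ^ (-α) * (t + l)⁻¹) 0 hl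
  rw [mul_zero, smul_eq_mul] at hscale
  rw [← hscale, ← integral_const_mul, ← integral_const_mul]
  refine setIntegral_congr_fun measurableSet_Ioi fun t (ht : 0 < t) => ?_
  rw [Real.mul_rpow hl.le ht.le, show l * t + l = l * (t + 1) by ring, mul_inv]
  field_simp

lemma integral_rpow_neg_mul_inv_add_pos (hα₀ : 0 < α) (hα₁ : α < 1) (hl : 0 < l) :
    0 < ∫ t in Ioi 0, t ^ (-α) * (t + l)⁻¹ := by
  rw [setIntegral_pos_iff_support_of_nonneg_ae _ (integrableOn_rpow_neg_mul_inv_add hα₀ hα₁ hl)]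
  · have : Ioi (0 : ℝ) ⊆ Function.support (fun t => t ^ (-α) * (t + l)⁻¹) ∩ Ioi 0 :=
      fun t (ht : 0 < t) => ⟨by simp only [Function.mem_support]; positivity, ht⟩
    exact (measure_mono this).trans_lt' (by simp)
  · filter_upwards [ae_restrict_mem measurableSet_Ioi] with t (ht : 0 < t)
    positivity

lemma sum_rpow_neg_mul_nonneg {ι : Type*} (s : Finset ι) {lam c : ι → ℝ}
    (hlam : ∀ j ∈ s, 0 < lam j) (hα₀ : 0 < α) (hα₁ : α < 1)
    (h : ∀ μ : ℝ, 0 < μ → 0 ≤ ∑ j ∈ s, (μ + lam j)⁻¹ * c j) :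
    0 ≤ ∑ j ∈ s, lam j ^ (-α) * c j := by
  set C := ∫ t in Ioi (0 : ℝ), t ^ (-α) * (t + 1)⁻¹
  have hC : 0 < C := integral_rpow_neg_mul_inv_add_pos hα₀ hα₁ one_pos
  have hrepr : ∑ j ∈ s, lam j ^ (-α) * c j
      = C⁻¹ * ∫ t in Ioi 0, t ^ (-α) * ∑ j ∈ s, (t + lam j)⁻¹ * c j := by
    simp_rw [Finset.mul_sum, ← mul_assoc]
    rw [integral_finsetSum _ fun j hj =>
      (integrableOn_rpow_neg_mul_inv_add hα₀ hα₁ (hlam j hj)).mul_const _, Finset.mul_sum]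
    refine Finset.sum_congr rfl fun j hj => ?_
    rw [integral_mul_const, integral_rpow_neg_mul_inv_add (hlam j hj), mul_right_comm _ C,
      mul_comm _ C, inv_mul_cancel_left₀ hC.ne']
  rw [hrepr]
  refine mul_nonneg (inv_nonneg.mpr hC.le) (setIntegral_nonneg measurableSet_Ioi ?_)
  exact fun t (ht : 0 < t) => mul_nonneg (Real.rpow_nonneg ht.le _) (h t ht)

end Scalar

namespace Matrix

variable {n K : Type*} [Fintype n] [DecidableEq n] [Field K] {P B : Matrix n n K} {d : n → K}

lemma transpose_mul_diagonal_mul_apply (P : Matrix n n K) (d : n → K) (i i' : n) :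
    (Pᵀ * diagonal d * P) i i' = ∑ j, d j * P j i * P j i' := by
  rw [mul_apply]
  simp only [mul_diagonal, transpose_apply]
  exact Finset.sum_congr rfl fun j _ => by ring

lemma eq_transpose_mul_diagonal_mul_of_mulVec_eq (hP : P * Pᵀ = 1)
    (h : ∀ j, B *ᵥ P j = d j • P j) : B = Pᵀ * diagonal d * P := by
  have hBP : B * Pᵀ = Pᵀ * diagonal d := by
    ext i j
    have hij := congrFun (h j) i
    simp only [mulVec, dotProduct, Pi.smul_apply, smul_eq_mul] at hij
    rw [mul_diagonal, transpose_apply, mul_comm, ← hij]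
    simp only [mul_apply, transpose_apply]
  rw [← hBP, Matrix.mul_assoc, mul_eq_one_comm.mp hP, Matrix.mul_one]

lemma inv_eq_transpose_mul_diagonal_mul_of_mulVec_eq (hP : P * Pᵀ = 1)
    (h : ∀ j, B *ᵥ P j = d j • P j) (hd : ∀ j, d j ≠ 0) :
    B⁻¹ = Pᵀ * diagonal d⁻¹ * P := by
  refine inv_eq_right_inv ?_
  have hdd : d * d⁻¹ = fun _ => 1 := funext fun j => mul_inv_cancel₀ (hd j)
  calc B * (Pᵀ * diagonal d⁻¹ * P)
      = Pᵀ * (diagonal d * (P * Pᵀ) * diagonal d⁻¹) * P := by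
        rw [eq_transpose_mul_diagonal_mul_of_mulVec_eq hP h]; simp only [Matrix.mul_assoc]
    _ = 1 := by
      rw [hP, Matrix.mul_one, diagonal_mul_diagonal, ← Pi.mul_def, hdd, diagonal_one,
        Matrix.mul_one, mul_eq_one_comm.mp hP]

end Matrix

theorem fractional_power_positivity_preserving_general {N : ℕ}
    (A : Matrix (Fin N) (Fin N) ℝ)
    (ψ : Fin N → Fin N → ℝ) (lam : Fin N → ℝ)
    (hpos : ∀ j, 0 < lam j)
    (horth : ∀ j j', ∑ i, ψ j i * ψ j' i = if j = j' then (1 : ℝ) else 0)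
    (heig : ∀ j, A.mulVec (ψ j) = lam j • ψ j)
    (hres : ∀ μ : ℝ, 0 ≤ μ → ∀ i i', 0 ≤ ((μ • (1 : Matrix (Fin N) (Fin N) ℝ) + A)⁻¹) i i') :
    ∀ α ∈ Set.Ioo (0 : ℝ) 1, ∀ i i', 0 ≤ ∑ j, lam j ^ (-α) * ψ j i * ψ j i' := by
  have hP : of ψ * (of ψ)ᵀ = 1 := by
    ext j j'
    simpa only [mul_apply, transpose_apply, of_apply, one_apply] using horth j j'
  have hresolvent (μ : ℝ) (hμ : 0 < μ) :
      (μ • 1 + A)⁻¹ = (of ψ)ᵀ * diagonal (fun j => μ + lam j)⁻¹ * of ψ := by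
    refine inv_eq_transpose_mul_diagonal_mul_of_mulVec_eq hP (fun j => ?_)
      fun j => (add_pos hμ (hpos j)).ne'
    rw [add_mulVec, smul_mulVec, one_mulVec, add_smul]
    exact congrArg _ (heig j)
  intro α ⟨hα₀, hα₁⟩ i i'
  simp_rw [mul_assoc]
  refine sum_rpow_neg_mul_nonneg _ (fun j _ => hpos j) hα₀ hα₁ fun μ hμ => ?_
  simpa only [hresolvent μ hμ, transpose_mul_diagonal_mul_apply, Pi.inv_apply, of_apply, mul_assoc]
    using hres μ hμ.le i i'

/-- If `A` is a real symmetric positive definite `N×N` matrix (given through an orthonormal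
eigenbasis `ψ j` with positive eigenvalues `lam j`) such that all entries of `(μI + A)⁻¹`
are nonnegative for every `μ ≥ 0`, then for every `α ∈ (0,1)` all entries of
`A^{-α}` (the matrix with entries `∑ j, lam j ^ (-α) * ψ j i * ψ j i'`) are nonnegative. -/
theorem fractional_power_positivity_preserving {N : ℕ}
    (A : Matrix (Fin N) (Fin N) ℝ) (hA : A.IsSymm)
    (ψ : Fin N → Fin N → ℝ) (lam : Fin N → ℝ)
    (hpos : ∀ j, 0 < lam j)
    (horth : ∀ j j', ∑ i, ψ j i * ψ j' i = if j = j' then (1 : ℝ) else 0)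
    (heig : ∀ j, A.mulVec (ψ j) = lam j • ψ j)
    (hres : ∀ μ : ℝ, 0 ≤ μ → ∀ i i', 0 ≤ ((μ • (1 : Matrix (Fin N) (Fin N) ℝ) + A)⁻¹) i i') :
    ∀ α ∈ Set.Ioo (0 : ℝ) 1, ∀ i i', 0 ≤ ∑ j, lam j ^ (-α) * ψ j i * ψ j i' :=
  fractional_power_positivity_preserving_general A ψ lam hpos horth heig hres
end

section
/- Let A be a real symmetric positive definite N×N matrix with smallest eigenvalue λ_1 > 0, let α ∈ (0,1), let E ≥ 0, and let r : ℝ → ℝ be a function satisfying |r(t) - t^α| ≤ E for all t ∈ (0,1]. Then for every f ∈ ℝ^N, the fully discrete approximation w = λ_1^{-α} r(λ_1 A^{-1}) f of u = A^{-α} f satisfies ‖u - w‖₂ ≤ λ_1^{-α} E ‖f‖₂, where ‖·‖₂ is the Euclidean norm on ℝ^N. -/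
/-!
Expanding in the orthonormal eigenbasis, `u - w` is the spectral multiplier with symbol
`c j = λⱼ^{-α} - λ₁^{-α} r(λ₁/λⱼ) = λ₁^{-α} ((λ₁/λⱼ)^α - r(λ₁/λⱼ))`. Since `λ₁/λⱼ ∈ (0,1]`,
`|c j| ≤ λ₁^{-α} E`, and by Plancherel and Parseval a spectral multiplier whose symbol is bounded
by `K` has Euclidean operator norm at most `K`.
-/

/-- The Euclidean norm on `ℝ^N`. -/
noncomputable def enorm2 {N : ℕ} (v : Fin N → ℝ) : ℝ := Real.sqrt (∑ i, v i ^ 2)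

open Matrix

section Orthonormal

variable {ι : Type*} [Fintype ι] [DecidableEq ι]

theorem dotProduct_vecMul_self_of_mul_transpose_eq_one {Q : Matrix ι ι ℝ} (hQ : Q * Qᵀ = 1)
    (a : ι → ℝ) : (a ᵥ* Q) ⬝ᵥ (a ᵥ* Q) = a ⬝ᵥ a := by
  rw [← dotProduct_mulVec, ← mulVec_transpose, mulVec_mulVec, hQ, one_mulVec]

variable {ψ : ι → ι → ℝ}

theorem of_mul_transpose_eq_one_of_orthonormal
    (horth : ∀ j j', ∑ i, ψ j i * ψ j' i = if j = j' then (1 : ℝ) else 0) :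
    of ψ * (of ψ)ᵀ = 1 := by
  ext j j'
  simpa [mul_apply, one_apply] using horth j j'

theorem sum_sq_expansion_eq_of_orthonormal
    (horth : ∀ j j', ∑ i, ψ j i * ψ j' i = if j = j' then (1 : ℝ) else 0) (a : ι → ℝ) :
    ∑ i, (∑ j, a j * ψ j i) ^ 2 = ∑ j, a j ^ 2 := by
  simpa [dotProduct, vecMul, sq] using
    dotProduct_vecMul_self_of_mul_transpose_eq_one (of_mul_transpose_eq_one_of_orthonormal horth) a

theorem sum_sq_coeff_eq_of_orthonormal
    (horth : ∀ j j', ∑ i, ψ j i * ψ j' i = if j = j' then (1 : ℝ) else 0) (f : ι → ℝ) :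
    ∑ j, (∑ i, f i * ψ j i) ^ 2 = ∑ i, f i ^ 2 := by
  have hQ : (of ψ)ᵀ * (of ψ)ᵀᵀ = 1 :=
    mul_eq_one_comm.mp (of_mul_transpose_eq_one_of_orthonormal horth)
  simpa [dotProduct, vecMul, sq] using dotProduct_vecMul_self_of_mul_transpose_eq_one hQ f

end Orthonormal

/-- `φ(A) f` for the symmetric matrix `A` with orthonormal eigenvectors `ψ j`, where `c j`
stands for `φ(λⱼ)`. -/
def spectralMultiplier {ι : Type*} [Fintype ι] (ψ : ι → ι → ℝ) (c : ι → ℝ) (f : ι → ℝ) :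
    ι → ℝ :=
  fun i => ∑ j, c j * (∑ i', f i' * ψ j i') * ψ j i

theorem enorm2_spectralMultiplier_le {N : ℕ} {ψ : Fin N → Fin N → ℝ}
    (horth : ∀ j j', ∑ i, ψ j i * ψ j' i = if j = j' then (1 : ℝ) else 0)
    {c : Fin N → ℝ} {K : ℝ} (hK : 0 ≤ K) (hc : ∀ j, |c j| ≤ K) (f : Fin N → ℝ) :
    enorm2 (spectralMultiplier ψ c f) ≤ K * enorm2 f := by
  set g : Fin N → ℝ := fun j => ∑ i', f i' * ψ j i'
  have hsum : ∑ j, (c j * g j) ^ 2 ≤ K ^ 2 * ∑ i, f i ^ 2 := by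
    rw [← sum_sq_coeff_eq_of_orthonormal horth f, Finset.mul_sum]
    gcongr with j
    rw [mul_pow]
    exact mul_le_mul_of_nonneg_right (sq_le_sq.mpr ((hc j).trans (le_abs_self K))) (sq_nonneg _)
  calc enorm2 (spectralMultiplier ψ c f) = Real.sqrt (∑ j, (c j * g j) ^ 2) := by
        rw [enorm2, ← sum_sq_expansion_eq_of_orthonormal horth (fun j => c j * g j)]
        rfl
    _ ≤ Real.sqrt (K ^ 2 * ∑ i, f i ^ 2) := Real.sqrt_le_sqrt hsum
    _ = K * enorm2 f := by rw [Real.sqrt_mul (sq_nonneg K), Real.sqrt_sq hK, enorm2]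

theorem abs_rpow_neg_sub_mul_le {α E l₁ l : ℝ} {r : ℝ → ℝ}
    (hr : ∀ t ∈ Set.Ioc (0 : ℝ) 1, |r t - t ^ α| ≤ E) (hl₁ : 0 < l₁) (hle : l₁ ≤ l) :
    |l ^ (-α) - l₁ ^ (-α) * r (l₁ / l)| ≤ l₁ ^ (-α) * E := by
  have hl : 0 < l := hl₁.trans_le hle
  have hscale : l ^ (-α) = l₁ ^ (-α) * (l₁ / l) ^ α := by
    rw [Real.div_rpow hl₁.le hl.le, Real.rpow_neg hl₁.le, Real.rpow_neg hl.le]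
    field_simp
  rw [hscale, ← mul_sub, abs_mul, abs_of_pos (Real.rpow_pos_of_pos hl₁ _), abs_sub_comm]
  exact mul_le_mul_of_nonneg_left (hr _ ⟨div_pos hl₁ hl, (div_le_one hl).mpr hle⟩)
    (Real.rpow_nonneg hl₁.le _)

theorem fully_discrete_bura_error_general {N : ℕ} (hN : 0 < N)
    (ψ : Fin N → Fin N → ℝ) (lam : Fin N → ℝ)
    (hpos : ∀ j, 0 < lam j) (hmono : Monotone lam)
    (horth : ∀ j j', ∑ i, ψ j i * ψ j' i = if j = j' then (1 : ℝ) else 0)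
    (α : ℝ)
    (E : ℝ) (hE : 0 ≤ E) (r : ℝ → ℝ)
    (hr : ∀ t ∈ Set.Ioc (0 : ℝ) 1, |r t - t ^ α| ≤ E)
    (f u w : Fin N → ℝ)
    (hu : u = fun i => ∑ j, lam j ^ (-α) * (∑ i', f i' * ψ j i') * ψ j i)
    (hw : w = fun i =>
      lam ⟨0, hN⟩ ^ (-α) * ∑ j, r (lam ⟨0, hN⟩ / lam j) * (∑ i', f i' * ψ j i') * ψ j i) :
    enorm2 (u - w) ≤ lam ⟨0, hN⟩ ^ (-α) * E * enorm2 f := by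
  set l₁ := lam ⟨0, hN⟩
  have hl₁ : 0 < l₁ := hpos _
  have hdiff : u - w =
      spectralMultiplier ψ (fun j => lam j ^ (-α) - l₁ ^ (-α) * r (l₁ / lam j)) f := by
    funext i
    simp only [hu, hw, spectralMultiplier, Pi.sub_apply]
    rw [Finset.mul_sum, ← Finset.sum_sub_distrib]
    exact Finset.sum_congr rfl fun j _ => by ring
  rw [hdiff]
  exact enorm2_spectralMultiplier_le horth (mul_nonneg (Real.rpow_nonneg hl₁.le _) hE)
    (fun j => abs_rpow_neg_sub_mul_le hr hl₁ (hmono (Fin.mk_le_of_le_val (Nat.zero_le _)))) f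

/-- Error bound for the fully discrete BURA approximation: if `A` is symmetric positive
definite with orthonormal eigenvectors `ψ j` and (nondecreasingly ordered) eigenvalues
`lam j`, with smallest eigenvalue `lam ⟨0,hN⟩ > 0`, `α ∈ (0,1)`, and `r` satisfies
`|r(t) - t^α| ≤ E` on `(0,1]`, then `w = λ₁^{-α} r(λ₁ A⁻¹) f` approximates `u = A^{-α} f`
with `‖u - w‖₂ ≤ λ₁^{-α} E ‖f‖₂`. -/
theorem fully_discrete_bura_error {N : ℕ} (hN : 0 < N)
    (A : Matrix (Fin N) (Fin N) ℝ) (hA : A.IsSymm)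
    (ψ : Fin N → Fin N → ℝ) (lam : Fin N → ℝ)
    (hpos : ∀ j, 0 < lam j) (hmono : Monotone lam)
    (horth : ∀ j j', ∑ i, ψ j i * ψ j' i = if j = j' then (1 : ℝ) else 0)
    (heig : ∀ j, A.mulVec (ψ j) = lam j • ψ j)
    (α : ℝ) (hα : α ∈ Set.Ioo (0 : ℝ) 1)
    (E : ℝ) (hE : 0 ≤ E) (r : ℝ → ℝ)
    (hr : ∀ t ∈ Set.Ioc (0 : ℝ) 1, |r t - t ^ α| ≤ E)
    (f u w : Fin N → ℝ)
    (hu : u = fun i => ∑ j, lam j ^ (-α) * (∑ i', f i' * ψ j i') * ψ j i)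
    (hw : w = fun i =>
      lam ⟨0, hN⟩ ^ (-α) * ∑ j, r (lam ⟨0, hN⟩ / lam j) * (∑ i', f i' * ψ j i') * ψ j i) :
    enorm2 (u - w) ≤ lam ⟨0, hN⟩ ^ (-α) * E * enorm2 f :=
  fully_discrete_bura_error_general hN ψ lam hpos hmono horth α E hE r hr f u w hu hw
end
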